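/- Let p be an odd prime, s ≥ 1, r an integer, and S_1(n,r) = p^{−⌊(n−1)/(p−1)⌋} · Σ_{k ≡ r (mod p), 0≤k≤n} (−1)^k C(n,k). If n = (p−1)s − 1, then S_1(n,r) ≡ (−1)^{s−1}·((s+1)/2 + r) (mod p), where (s+1)/2 denotes the inverse of 2 times (s+1) in F_p. -/

import Mathlib

/-- `∑_{k ≡ r (mod p), 0 ≤ k ≤ n} (-1)^k C(n,k)`. -/
def S1sum (p n : ℕ) (r : ℤ) : ℤ :=
  ∑ k ∈ Finset.range (n + 1), if (k : ℤ) ≡ r [ZMOD p] then (-1) ^ k * (n.choose k : ℤ) else 0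

/-- `S_1(n,r) = p^{-⌊(n-1)/(p-1)⌋} ∑_{k ≡ r (p)} (-1)^k C(n,k)`. -/
def S1 (p n : ℕ) (r : ℤ) : ℤ := S1sum p n r / (p : ℤ) ^ ((n - 1) / (p - 1))

/-!
In the group ring `ℤ[ZMod p]` put `u = 1 - [1]`; then `S1sum p n r` is the coefficient of `[r]`
in `uⁿ`. Since `(-1)ᵏ C(p-1,k) ≡ 1 (mod p)`, we have `u^(p-1) = N + p B`, where `N = ∑ₓ [x]` is
the norm element, `B = ∑ₖ bₖ [k]` and `bₖ = ((-1)ᵏ C(p-1,k) - 1)/p`, while `u N = 0`. Hence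
`u^(n+p-1) = p B uⁿ` for `n ≥ 1`, so `u^((p-1)s-1) = p^(s-1) B^(s-1) u^(p-2)` and
`S_1 = coeff (B^(s-1) u^(p-2))`. Modulo `p` the coefficients of `u^(p-2)` are `x ↦ 1 + x`, and
multiplication by `B` sends a coefficient function `a (c + x)` to `-a (c + 1/2 + x)`, because
`∑ bₖ = -1` and `∑ k bₖ = (1 - p)/2` exactly.
-/

open Finset AddMonoidAlgebra

section GroupRing

variable {R G : Type*} [CommRing R]

lemma one_sub_single_pow [AddCommMonoid G] (g : G) (n : ℕ) :
    (1 - single g 1 : R[G]) ^ n =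
      ∑ k ∈ range (n + 1), single (k • g) ((-1) ^ k * n.choose k : R) := by
  rw [sub_eq_neg_add, ← single_neg, add_pow]
  refine sum_congr rfl fun k _ => ?_
  rw [single_pow, one_pow, mul_one, natCast_def, single_mul_single, add_zero]

lemma one_sub_single_mul_sum_single [AddCommGroup G] [Fintype G] (g : G) :
    (1 - single g 1 : R[G]) * ∑ x, single x 1 = 0 := by
  rw [sub_mul, one_mul, mul_sum, sub_eq_zero]
  simp only [single_mul_single, mul_one]
  exact (Equiv.sum_comp (Equiv.addLeft g) fun x => single x (1 : R)).symm

end GroupRing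

lemma ZMod.sum_range_natCast {M : Type*} [AddCommMonoid M] (p : ℕ) [NeZero p]
    (f : ZMod p → M) : ∑ k ∈ range p, f k = ∑ x, f x :=
  sum_nbij' (fun k => k) ZMod.val (fun _ _ => mem_univ _)
    (fun x _ => mem_range.2 x.val_lt) (fun _ hk => ZMod.val_cast_of_lt (mem_range.1 hk))
    (fun x _ => ZMod.natCast_zmod_val x) fun _ _ => rfl

lemma alternating_sum_range_mul_choose {n : ℕ} (hn : n ≠ 1) :
    ∑ k ∈ range (n + 1), (k : ℤ) * ((-1) ^ k * n.choose k) = 0 := by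
  obtain _ | m := n
  · simp
  have hm : m ≠ 0 := by omega
  have hterm (k : ℕ) : ((k + 1 : ℕ) : ℤ) * ((-1) ^ (k + 1) * (m + 1).choose (k + 1)) =
      -(m + 1) * ((-1) ^ k * m.choose k) := by
    have := congrArg (Nat.cast : ℕ → ℤ) (Nat.add_one_mul_choose_eq m k)
    push_cast at this ⊢
    linear_combination (-1) ^ k * this
  rw [sum_range_succ', sum_congr rfl fun k _ => hterm k, ← mul_sum,
    Int.alternating_sum_range_choose, if_neg hm]
  simp

section Binomial

variable {p : ℕ} [hp : Fact p.Prime]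

lemma neg_one_pow_mul_choose_pred {k : ℕ} (hk : k < p) :
    ((-1) ^ k * (p - 1).choose k : ZMod p) = 1 := by
  induction k with
  | zero => simp
  | succ k ih =>
    have hpascal := Nat.choose_succ_succ' (p - 1) k
    rw [Nat.sub_add_cancel hp.out.one_le] at hpascal
    have hdvd : (p.choose (k + 1) : ZMod p) = 0 :=
      (ZMod.natCast_eq_zero_iff _ _).2 (hp.out.dvd_choose_self k.succ_ne_zero hk)
    rw [hpascal, Nat.cast_add] at hdvd
    linear_combination (-1) ^ (k + 1) * hdvd + ih (by omega)

lemma neg_one_pow_mul_choose_sub_two {k : ℕ} (hk : k < p) :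
    ((-1) ^ k * (p - 2).choose k : ZMod p) = k + 1 := by
  induction k with
  | zero => simp
  | succ k ih =>
    have hpascal := Nat.choose_succ_succ' (p - 2) k
    rw [show p - 2 + 1 = p - 1 by have := hp.out.two_le; omega] at hpascal
    have hpred := neg_one_pow_mul_choose_pred hk
    rw [hpascal, Nat.cast_add] at hpred
    push_cast
    linear_combination hpred + ih (by omega)

end Binomial

def chooseQuot (p k : ℕ) : ℤ := ((-1) ^ k * (p - 1).choose k - 1) / p

section ChooseQuot

variable {p : ℕ} [hp : Fact p.Prime]

lemma mul_chooseQuot {k : ℕ} (hk : k < p) :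
    p * chooseQuot p k = (-1) ^ k * (p - 1).choose k - 1 := by
  refine Int.mul_ediv_cancel' ((ZMod.intCast_zmod_eq_zero_iff_dvd _ _).1 ?_)
  push_cast
  rw [neg_one_pow_mul_choose_pred hk, sub_self]

lemma sum_chooseQuot : ∑ k ∈ range p, chooseQuot p k = -1 := by
  have hp0 : (p : ℤ) ≠ 0 := by exact_mod_cast hp.out.ne_zero
  apply mul_left_cancel₀ hp0
  have halt := Int.alternating_sum_range_choose (n := p - 1)
  rw [if_neg (by have := hp.out.two_le; omega), Nat.sub_add_cancel hp.out.one_le] at halt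
  rw [mul_sum, sum_congr rfl fun k hk => mul_chooseQuot (mem_range.1 hk), sum_sub_distrib, halt]
  simp

lemma two_mul_sum_mul_chooseQuot (hp2 : p ≠ 2) :
    2 * ∑ k ∈ range p, k * chooseQuot p k = 1 - p := by
  have hp0 : (p : ℤ) ≠ 0 := by exact_mod_cast hp.out.ne_zero
  apply mul_left_cancel₀ hp0
  have hgauss := congrArg (Nat.cast : ℕ → ℤ) (sum_range_id_mul_two p)
  push_cast [Nat.cast_sub hp.out.one_le] at hgauss
  have hmoment := alternating_sum_range_mul_choose (n := p - 1)
    (by have := hp.out.two_le; omega)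
  rw [Nat.sub_add_cancel hp.out.one_le] at hmoment
  calc (p : ℤ) * (2 * ∑ k ∈ range p, k * chooseQuot p k)
      = 2 * ∑ k ∈ range p, (k : ℤ) * ((-1) ^ k * (p - 1).choose k - 1) := by
        rw [mul_left_comm, mul_sum, mul_sum, mul_sum]
        refine sum_congr rfl fun k hk => ?_
        rw [← mul_chooseQuot (mem_range.1 hk)]
        ring
    _ = p * (1 - p) := by
        simp only [mul_sub, mul_one, sum_sub_distrib, hmoment]
        linear_combination -hgauss

end ChooseQuot

noncomputable def chooseQuotElem (p : ℕ) : ℤ[ZMod p] :=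
  ∑ k ∈ range p, single (k : ZMod p) (chooseQuot p k)

lemma S1sum_eq_coeff (p n : ℕ) (r : ℤ) :
    S1sum p n r = ((1 - single 1 1 : ℤ[ZMod p]) ^ n).coeff r := by
  rw [S1sum, one_sub_single_pow, AddMonoidAlgebra.coeff_sum, Finsupp.finsetSum_apply]
  refine sum_congr rfl fun k _ => ?_
  rw [coeff_single, Finsupp.single_apply, nsmul_one]
  refine if_congr ?_ rfl rfl
  rw [← ZMod.intCast_eq_intCast_iff, Int.cast_natCast]

lemma coeff_chooseQuotElem_mul {p : ℕ} (F : ℤ[ZMod p]) (x : ZMod p) :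
    (chooseQuotElem p * F).coeff x = ∑ k ∈ range p, chooseQuot p k * F.coeff (x - k) := by
  simp only [chooseQuotElem, sum_mul, AddMonoidAlgebra.coeff_sum, Finsupp.finsetSum_apply,
    coeff_single_mul_apply, neg_add_eq_sub]

section GroupRingModP

variable {p : ℕ} [hp : Fact p.Prime]

lemma one_sub_single_pow_pred :
    (1 - single 1 1 : ℤ[ZMod p]) ^ (p - 1) = ∑ x, single x 1 + (p : ℤ) • chooseQuotElem p := by
  rw [one_sub_single_pow, Nat.sub_add_cancel hp.out.one_le, ← ZMod.sum_range_natCast,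
    chooseQuotElem, smul_sum, ← sum_add_distrib]
  refine sum_congr rfl fun k hk => ?_
  rw [smul_single', ← single_add, mul_chooseQuot (mem_range.1 hk), nsmul_one]
  ring_nf

lemma one_sub_single_pow_add_pred {n : ℕ} (hn : n ≠ 0) :
    (1 - single 1 1 : ℤ[ZMod p]) ^ (n + (p - 1)) =
      (p : ℤ) • (chooseQuotElem p * (1 - single 1 1) ^ n) := by
  obtain ⟨m, rfl⟩ := Nat.exists_eq_succ_of_ne_zero hn
  rw [pow_add, one_sub_single_pow_pred, pow_succ, mul_add, mul_assoc,
    one_sub_single_mul_sum_single, mul_zero, zero_add, mul_smul_comm, ← pow_succ, mul_comm]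

lemma one_sub_single_pow_mul_succ_sub_one (hp2 : p ≠ 2) (s : ℕ) :
    (1 - single 1 1 : ℤ[ZMod p]) ^ ((p - 1) * (s + 1) - 1) =
      (p : ℤ) ^ s • (chooseQuotElem p ^ s * (1 - single 1 1) ^ (p - 2)) := by
  have hp3 : 3 ≤ p := by have := hp.out.two_le; omega
  induction s with
  | zero => simp [show p - 1 - 1 = p - 2 by omega]
  | succ s ih =>
    have h2 : 2 ≤ (p - 1) * (s + 1) := le_trans (by omega) (Nat.le_mul_of_pos_right _ s.succ_pos)
    have hexp : (p - 1) * (s + 1 + 1) - 1 = ((p - 1) * (s + 1) - 1) + (p - 1) := by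
      rw [Nat.mul_succ]
      omega
    rw [hexp, one_sub_single_pow_add_pred (by omega), ih, mul_smul_comm, smul_smul, ← pow_succ',
      ← mul_assoc, ← pow_succ']

lemma coeff_chooseQuotElem_mul_of_affine (hp2 : p ≠ 2) {F : ℤ[ZMod p]} {a c : ZMod p}
    (hF : ∀ y, (F.coeff y : ZMod p) = a * (c + y)) (x : ZMod p) :
    ((chooseQuotElem p * F).coeff x : ZMod p) = -a * (c + 2⁻¹ + x) := by
  have hsum := congrArg (Int.cast : ℤ → ZMod p) (sum_chooseQuot (p := p))
  have hmoment := congrArg (Int.cast : ℤ → ZMod p) (two_mul_sum_mul_chooseQuot hp2)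
  push_cast [ZMod.natCast_self, sub_zero] at hsum hmoment
  rw [coeff_chooseQuotElem_mul]
  push_cast
  simp only [hF]
  calc ∑ k ∈ range p, (chooseQuot p k : ZMod p) * (a * (c + (x - k)))
      = a * (c + x) * ∑ k ∈ range p, (chooseQuot p k : ZMod p)
        - a * ∑ k ∈ range p, (k : ZMod p) * chooseQuot p k := by
        rw [mul_sum, mul_sum, ← sum_sub_distrib]
        exact sum_congr rfl fun k _ => by ring
    _ = -a * (c + 2⁻¹ + x) := by
        rw [hsum, eq_inv_of_mul_eq_one_right hmoment]
        ring

lemma coeff_one_sub_single_pow_sub_two (y : ZMod p) :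
    (((1 - single 1 1 : ℤ[ZMod p]) ^ (p - 2)).coeff y : ZMod p) = 1 + y := by
  have hp_two := hp.out.two_le
  rw [one_sub_single_pow, AddMonoidAlgebra.coeff_sum, Finsupp.finsetSum_apply,
    sum_subset (range_subset_range.2 (by omega : p - 2 + 1 ≤ p)) fun k hk hk' => by
    rw [Nat.choose_eq_zero_of_lt (by simp only [mem_range] at hk hk'; omega)]; simp]
  push_cast
  rw [sum_congr rfl fun k hk => ?_, ZMod.sum_range_natCast p fun x => if x = y then x + 1 else 0,
    Fintype.sum_ite_eq', add_comm]
  rw [coeff_single, Finsupp.single_apply, nsmul_one]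
  split_ifs
  · push_cast
    exact neg_one_pow_mul_choose_sub_two (mem_range.1 hk)
  · exact Int.cast_zero

lemma coeff_chooseQuotElem_pow_mul (hp2 : p ≠ 2) (s : ℕ) (y : ZMod p) :
    ((chooseQuotElem p ^ s * (1 - single 1 1) ^ (p - 2)).coeff y : ZMod p) =
      (-1) ^ s * ((s + 2) * 2⁻¹ + y) := by
  induction s generalizing y with
  | zero =>
    have h2 : (2 : ZMod p) * 2⁻¹ = 1 :=
      mul_inv_cancel₀ (Ring.two_ne_zero (by rwa [ZMod.ringChar_zmod_n]))
    rw [pow_zero, one_mul, coeff_one_sub_single_pow_sub_two]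
    push_cast
    linear_combination -h2
  | succ s ih =>
    rw [pow_succ', mul_assoc, coeff_chooseQuotElem_mul_of_affine hp2 ih]
    push_cast
    ring

end GroupRingModP

theorem stmt12 (p s : ℕ) (r : ℤ) (hp : p.Prime) (hodd : Odd p) (hs : 1 ≤ s) :
    ((S1 p ((p - 1) * s - 1) r : ℤ) : ZMod p) =
      (-1) ^ (s - 1) * (((s : ZMod p) + 1) * (2 : ZMod p)⁻¹ + (r : ZMod p)) := by
  have : Fact p.Prime := ⟨hp⟩
  have hp2 : p ≠ 2 := by rintro rfl; exact absurd hodd (by decide)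
  obtain ⟨t, rfl⟩ : ∃ t, s = t + 1 := ⟨s - 1, by omega⟩
  have hexp : ((p - 1) * (t + 1) - 1 - 1) / (p - 1) = t := by
    have hq : 2 ≤ p - 1 := by have := hp.two_le; omega
    generalize p - 1 = q at hq ⊢
    refine Nat.div_eq_of_lt_le ?_ ?_
    · rw [mul_comm t, Nat.mul_succ]; omega
    · rw [mul_comm (t + 1), Nat.mul_succ]; omega
  rw [S1, hexp, S1sum_eq_coeff, one_sub_single_pow_mul_succ_sub_one hp2, coeff_smul_apply,
    smul_eq_mul, Int.mul_ediv_cancel_left _ (pow_ne_zero _ (by exact_mod_cast hp.ne_zero)),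
    coeff_chooseQuotElem_pow_mul hp2, Nat.add_sub_cancel]
  push_cast
  ring
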